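/- arXiv:2010.08082 — 6 statements merged into one kernel-verified Lean document; each statement's English description precedes it below -/
import Mathlib

section
/- Fix μ > μ0 in M, c > 1, δ ∈ (0,1]. Assume there exists a unique x* ∈ M solving D_{ψ*_{μ0}}(x*, μ0) = D_{ψ*_μ}(x*, μ), and set D*_μ := D_{ψ*_{μ0}}(x*, μ0). Define T_high(δ) := inf{ t ≥ 1 : c·[log(1/δ) + 2·log(log_c(c·t))] / D*_μ ≤ t }. Then T_high(δ) ≤ max(1, A), where A := (2c/D*_μ)·log(1/δ) + (2c/D*_μ)·log( 2·log_c( 2c²/log c ) + 2·max( log_c(1/D*_μ), 0 ) ). -/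
open MeasureTheory ProbabilityTheory Real Set Filter
open scoped Classical ENNReal

noncomputable section

/-- A sub-`ψ_M` family of distributions: `M ⊆ ℝ` open convex; for each `μ ∈ M`, `ψ μ` is
finite and strictly convex on the common closed set `Λ` whose interior contains `0`,
differentiable on the interior of `Λ`, with `ψ μ 0 = 0` and `(ψ μ)' 0 = μ`; `ψs μ` is the
convex conjugate of `ψ μ`, finite and differentiable on `M` with derivative `ψs' μ`. -/
structure SubPsiFamily where
  M : Set ℝ
  Λ : Set ℝ
  ψ : ℝ → ℝ → ℝ
  ψs : ℝ → ℝ → ℝ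
  ψs' : ℝ → ℝ → ℝ
  M_open : IsOpen M
  M_convex : Convex ℝ M
  Λ_closed : IsClosed Λ
  zero_mem : (0 : ℝ) ∈ interior Λ
  ψ_strictConvexOn : ∀ μ ∈ M, StrictConvexOn ℝ Λ (ψ μ)
  ψ_diff : ∀ μ ∈ M, ∀ l ∈ interior Λ, DifferentiableAt ℝ (ψ μ) l
  ψ_zero : ∀ μ ∈ M, ψ μ 0 = 0
  ψ_deriv_zero : ∀ μ ∈ M, HasDerivAt (ψ μ) μ 0
  conj : ∀ μ ∈ M, ∀ x ∈ M, IsLUB ((fun l => l * x - ψ μ l) '' Λ) (ψs μ x)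
  ψs_deriv : ∀ μ ∈ M, ∀ x ∈ M, HasDerivAt (ψs μ) (ψs' μ x) x

namespace SubPsiFamily

variable (F : SubPsiFamily)

/-- Bregman divergence `D_{ψ*_μ}(z₁, z₂)`. -/
def D (μ z1 z2 : ℝ) : ℝ := F.ψs μ z1 - F.ψs μ z2 - F.ψs' μ z2 * (z1 - z2)

/-- The family has an order-preserving class of Bregman divergences. -/
def OrderPreserving : Prop :=
  ∀ z0 ∈ F.M, ∀ μ0 ∈ F.M, ∀ μ1 ∈ F.M,
    ((μ1 ≤ μ0 ∧ μ0 ≤ z0) ∨ (z0 ≤ μ0 ∧ μ0 ≤ μ1)) → F.D μ0 μ1 μ0 ≤ F.D z0 μ1 z0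

/-- LR-like statistic `L_n(μ₁, μ₀)` as a function of the sample mean `x̄`. -/
def LR (n : ℕ) (xbar μ1 μ0 : ℝ) : ℝ :=
  Real.exp (n * (F.ψs' μ0 μ1 * xbar - F.ψ μ0 (F.ψs' μ0 μ1)))

/-- `log GL_n(μ₁, μ₀) = log (max (sup_{z > μ1} L_n(z, μ0)) 1)`, as an extended real. -/
def logGL (n : ℕ) (xbar μ1 μ0 : ℝ) : EReal :=
  max (⨆ z : {z : ℝ // z ∈ F.M ∧ μ1 < z}, (Real.log (F.LR n xbar z μ0) : EReal)) 0

/-- A random variable `Y` has a sub-`ψ_μ` distribution under `P`. -/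
def SubPsi {Ω : Type*} [MeasurableSpace Ω] (P : Measure Ω) (μ : ℝ) (Y : Ω → ℝ) : Prop :=
  Measurable Y ∧ (∀ᵐ ω ∂P, Y ω ∈ closure F.M) ∧ (∫ ω, Y ω ∂P) = μ ∧
    ∀ l ∈ F.Λ, Real.log (∫ ω, Real.exp (l * Y ω) ∂P) ≤ F.ψ μ l

/-- A distribution `Q` on `ℝ` is sub-`ψ_μ`. -/
def SubPsiDist (Q : Measure ℝ) (μ : ℝ) : Prop :=
  (∀ᵐ x ∂Q, x ∈ closure F.M) ∧ (∫ x, x ∂Q) = μ ∧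
    ∀ l ∈ F.Λ, Real.log (∫ x, Real.exp (l * x) ∂Q) ≤ F.ψ μ l

end SubPsiFamily

/-- Sample mean `X̄_n` of the first `n` observations. -/
def sampleMean {Ω : Type*} (X : ℕ → Ω → ℝ) (n : ℕ) (ω : Ω) : ℝ :=
  (∑ i ∈ Finset.range n, X i ω) / n


/-- `T_high(δ) := inf{ t ≥ 1 : c·[log(1/δ) + 2·log(log_c(c·t))] / D ≤ t }`. -/
def Thigh (c δ D : ℝ) : ℝ :=
  sInf {t : ℝ | 1 ≤ t ∧ c * (Real.log (1 / δ) + 2 * Real.log (Real.logb c (c * t))) / D ≤ t}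

/-! With `L = log (1/δ)` and `B = 2 log_c (2c²/log c) + 2 max (log_c (1/D)) 0 ≥ 2`, the candidate
`A = (2c/D)(L + log B)` factors as `c A = (2c²/log c) · (log c · (L + log B)) · (1/D)`, so
`log_c (c A) ≤ B/2 + (L + log B) ≤ B + L ≤ B e^{L/2}` by `log x ≤ x` and `log B ≤ B/2`. Taking
logarithms, this is exactly the condition for `A` to lie in the set defining `T_high(δ)`.
When `A ≤ 1` (in particular when `D ≤ 0`), `t = 1` already lies in that set. -/

lemma Real.log_le_half_self {x : ℝ} (hx : 0 < x) : log x ≤ x / 2 := by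
  have h := log_le_sub_one_of_pos (half_pos hx)
  rw [log_div hx.ne' two_ne_zero] at h
  linarith [log_two_lt_d9]

lemma one_le_logb_two_mul_sq_div_log {c : ℝ} (hc : 1 < c) : 1 ≤ logb c (2 * c ^ 2 / log c) := by
  have hc0 : 0 < c := zero_lt_one.trans hc
  have hε : 0 < log c := log_pos hc
  rw [le_logb_iff_rpow_le hc (by positivity), rpow_one, le_div_iff₀ hε]
  nlinarith [log_le_self hc0.le]

lemma logb_mul_le_mul_exp {c d L B : ℝ} (hc : 1 < c) (hd : 0 < d) (hL : 0 ≤ L) (hB2 : 2 ≤ B)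
    (hB : 2 * logb c (2 * c ^ 2 / log c) + 2 * logb c (1 / d) ≤ B) :
    logb c (c * (2 * c / d * (L + log B))) ≤ B * exp (L / 2) := by
  have hε : 0 < log c := log_pos hc
  have hB0 : 0 < B := by linarith
  have hlogB : log B ≤ B / 2 := log_le_half_self hB0
  have hx : 0 < L + log B := by linarith [log_pos (by linarith : (1 : ℝ) < B)]
  have hsplit : c * (2 * c / d * (L + log B)) =
      2 * c ^ 2 / log c * (log c * (L + log B)) * (1 / d) := by
    field_simp
  have hmid : logb c (log c * (L + log B)) ≤ L + log B := by
    rw [← log_div_log, div_le_iff₀ hε]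
    calc log (log c * (L + log B)) ≤ log c * (L + log B) := log_le_self (mul_pos hε hx).le
      _ = (L + log B) * log c := mul_comm _ _
  have hexp : B * (1 + L / 2) ≤ B * exp (L / 2) := by
    gcongr; linarith [add_one_le_exp (L / 2)]
  rw [hsplit, logb_mul (by positivity) (by positivity), logb_mul (by positivity) (mul_pos hε hx).ne']
  calc _ ≤ B / 2 + (L + B / 2) := by linarith
    _ ≤ B * (1 + L / 2) := by nlinarith [mul_nonneg (sub_nonneg.2 hB2) hL]
    _ ≤ B * exp (L / 2) := hexp

lemma Thigh_le_of_le {c δ d t : ℝ} (ht1 : 1 ≤ t)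
    (ht : c * (log (1 / δ) + 2 * log (logb c (c * t))) / d ≤ t) : Thigh c δ d ≤ t :=
  csInf_le ⟨1, fun _ hs => hs.1⟩ ⟨ht1, ht⟩

lemma Thigh_le_one {c δ d : ℝ} (hc : 1 < c) (h : c * log (1 / δ) / d ≤ 1) : Thigh c δ d ≤ 1 :=
  Thigh_le_of_le le_rfl (by simpa [logb_self_eq_one hc] using h)

theorem Thigh_le_max {c δ d : ℝ} (hc : 1 < c) (hδ : δ ∈ Ioc 0 1) :
    Thigh c δ d ≤ max 1 (2 * c / d * log (1 / δ) + 2 * c / d *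
      log (2 * logb c (2 * c ^ 2 / log c) + 2 * max (logb c (1 / d)) 0)) := by
  set L := log (1 / δ)
  set B := 2 * logb c (2 * c ^ 2 / log c) + 2 * max (logb c (1 / d)) 0
  have hc0 : 0 < c := zero_lt_one.trans hc
  have hL : 0 ≤ L := log_nonneg (one_le_one_div hδ.1 hδ.2)
  have hB2 : 2 ≤ B := by
    linarith [one_le_logb_two_mul_sq_div_log hc, le_max_right (logb c (1 / d)) 0]
  have hlogB : 0 ≤ log B := log_nonneg (by linarith)
  rcases le_or_gt d 0 with hd | hd
  · refine (Thigh_le_one hc ?_).trans (le_max_left _ _)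
    exact (div_nonpos_of_nonneg_of_nonpos (by positivity) hd).trans zero_le_one
  rw [← mul_add]
  rcases le_or_gt (2 * c / d * (L + log B)) 1 with hA | hA
  · refine (Thigh_le_one hc ?_).trans (le_max_left _ _)
    calc c * L / d = c / d * L := by ring
      _ ≤ c / d * (2 * (L + log B)) := by gcongr; linarith
      _ = 2 * c / d * (L + log B) := by ring
      _ ≤ 1 := hA
  refine (Thigh_le_of_le hA.le ?_).trans (le_max_right _ _)
  have hcA : 0 < logb c (c * (2 * c / d * (L + log B))) :=
    logb_pos hc (one_lt_mul hc.le hA)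
  have hlog : log (logb c (c * (2 * c / d * (L + log B)))) ≤ log B + L / 2 := by
    rw [← log_exp (L / 2), ← log_mul (by positivity) (exp_ne_zero _)]
    exact log_le_log hcA (logb_mul_le_mul_exp hc hd hL hB2
      (by linarith [le_max_left (logb c (1 / d)) 0]))
  calc c * (L + 2 * log (logb c (c * (2 * c / d * (L + log B))))) / d
      ≤ c * (L + 2 * (log B + L / 2)) / d := by gcongr
    _ = 2 * c / d * (L + log B) := by ring

theorem Thigh_le_general
    (F : SubPsiFamily)
    (μ0 : ℝ)
    (c δ : ℝ) (hc : 1 < c) (hδ : δ ∈ Set.Ioc (0 : ℝ) 1)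
    (xstar : ℝ) :
    Thigh c δ (F.D μ0 xstar μ0) ≤
      max 1
        (2 * c / F.D μ0 xstar μ0 * Real.log (1 / δ) +
          2 * c / F.D μ0 xstar μ0 *
            Real.log (2 * Real.logb c (2 * c ^ 2 / Real.log c) +
              2 * max (Real.logb c (1 / F.D μ0 xstar μ0)) 0)) :=
  Thigh_le_max hc hδ

/-- **Explicit upper bound on `T_high(δ)` (second claim of Theorem 3).** -/
theorem Thigh_le
    (F : SubPsiFamily)
    (μ0 μ : ℝ) (hμ0 : μ0 ∈ F.M) (hμM : μ ∈ F.M) (h0 : μ0 < μ)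
    (c δ : ℝ) (hc : 1 < c) (hδ : δ ∈ Set.Ioc (0 : ℝ) 1)
    (xstar : ℝ) (hxstar : xstar ∈ F.M) (hxeq : F.D μ0 xstar μ0 = F.D μ xstar μ)
    (huniq : ∀ y ∈ F.M, F.D μ0 y μ0 = F.D μ y μ → y = xstar) :
    Thigh c δ (F.D μ0 xstar μ0) ≤
      max 1
        (2 * c / F.D μ0 xstar μ0 * Real.log (1 / δ) +
          2 * c / F.D μ0 xstar μ0 *
            Real.log (2 * Real.logb c (2 * c ^ 2 / Real.log c) +
              2 * max (Real.logb c (1 / F.D μ0 xstar μ0)) 0)) :=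
  Thigh_le_general F μ0 c δ hc hδ xstar

end
end

section
/- Consider an EF-like sub-B family: there is an extended-real-valued convex function B, finite, strictly convex and differentiable on Λ := (∇B)^{−1}(M), such that ψ_μ(λ) = B(λ + θ_μ) − B(θ_μ) with θ_μ := (∇B)^{−1}(μ) for each μ ∈ M. Suppose ∇B is convex (equivalently, ∇B* is concave). Fix n, a sample mean x̄, and d > 0; for μ0 ∈ M with μ0 ≤ x̄, let μ1 = μ1(μ0) > μ0 be defined by D_{B*}(μ1, μ0) = d, where D_{B*}(z1, z0) := B*(z1) − B*(z0) − (B*)'(z0)(z1 − z0). Then the map μ0 ↦ L_n(μ1(μ0), μ0) = exp{ n·( d + [(B*)'(μ1) − (B*)'(μ0)]·(x̄ − μ1) ) } is nonincreasing on (−∞, x̄] ∩ M; equivalently, the derivative in μ0 of f(μ0) := d + [(B*)'(μ1(μ0)) − (B*)'(μ0)]·(x̄ − μ1(μ0)) is nonpositive for all μ0 ≤ x̄ in M. -/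
/-!
Write `g = (B*)'`, which is increasing and concave, and `D = D_{B*}`. For null parameters
`a < b` with partners `a₁ = μ1 a`, `b₁ = μ1 b`, the three-point identity
`D(z, x) = D(z, y) + D(y, x) + (g y - g x)(z - y)` forces `a₁ ≤ b₁`. The heart of the matter is
`g b₁ - g b ≤ g a₁ - g a`: on an interval, concavity of `g` squeezes `D(y, x) = ∫ₓʸ (g - g x)`
between the trapezoid `slope g x y · (y - x)² / 2` and the area under the secant of `g` through
`y` and a point to its right; if the increment of `g` grew from `a` to `b`, these bounds and
`D(a₁, a) = D(b₁, b)` would contradict AM-GM. With the comparison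
`(g a₁ - g a)(a₁ - b) ≤ (g b₁ - g b)(b₁ - b)` and `b ≤ x̄`, this makes
`(g μ1 - g μ0)(x̄ - μ1)` antitone in `μ0`.
-/

open Real Set

-- `bregmanDiv B g y x` is `D_B(y, x)` when `g = B'`.
def bregmanDiv (B g : ℝ → ℝ) (y x : ℝ) : ℝ := B y - B x - g x * (y - x)

lemma bregmanDiv_add_bregmanDiv (B g : ℝ → ℝ) (x y z : ℝ) :
    bregmanDiv B g z y + bregmanDiv B g y x + (g y - g x) * (z - y) = bregmanDiv B g z x := by
  unfold bregmanDiv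
  ring

lemma sub_le_sub_of_hasDerivAt_le {f f' h h' : ℝ → ℝ} {a b : ℝ} (hab : a ≤ b)
    (hf : ∀ x ∈ Icc a b, HasDerivAt f (f' x) x) (hh : ∀ x ∈ Icc a b, HasDerivAt h (h' x) x)
    (hle : ∀ x ∈ Icc a b, f' x ≤ h' x) : f b - f a ≤ h b - h a := by
  have hmono : MonotoneOn (fun x => h x - f x) (Icc a b) :=
    monotoneOn_of_hasDerivWithinAt_nonneg (f' := fun x => h' x - f' x) (convex_Icc a b)
      (fun x hx => ((hh x hx).sub (hf x hx)).continuousAt.continuousWithinAt)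
      (fun x hx => ((hh x (interior_subset hx)).sub (hf x (interior_subset hx))).hasDerivWithinAt)
      (fun x hx => sub_nonneg.2 (hle x (interior_subset hx)))
  have := hmono (left_mem_Icc.2 hab) (right_mem_Icc.2 hab) hab
  linarith

lemma hasDerivAt_affine_antideriv (c m x s : ℝ) :
    HasDerivAt (fun t => c * (t - x) + m * (t - x) ^ 2 / 2) (c + m * (s - x)) s := by
  have hlin := (hasDerivAt_id' s).sub_const x
  refine ((hlin.const_mul c).fun_add (((hlin.fun_pow 2).const_mul m).div_const 2)).congr_deriv ?_
  norm_num
  ring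

section Bregman

variable {M : Set ℝ} {B g : ℝ → ℝ} {x y z : ℝ}

lemma StrictConvexOn.strictMonoOn_of_hasDerivAt (hB : StrictConvexOn ℝ M B)
    (hBg : ∀ x ∈ M, HasDerivAt B (g x) x) : StrictMonoOn g M :=
  fun x hx y hy hxy => (hB.lt_slope_of_hasDerivAt hx hy hxy (hBg x hx)).trans
    (hB.slope_lt_of_hasDerivAt hx hy hxy (hBg y hy))

lemma StrictConvexOn.bregmanDiv_pos (hB : StrictConvexOn ℝ M B)
    (hBg : ∀ x ∈ M, HasDerivAt B (g x) x) (hx : x ∈ M) (hy : y ∈ M) (hxy : x ≠ y) :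
    0 < bregmanDiv B g y x := by
  unfold bregmanDiv
  rcases hxy.lt_or_gt with h | h
  · have := hB.lt_slope_of_hasDerivAt hx hy h (hBg x hx)
    rw [slope_def_field, lt_div_iff₀ (sub_pos.2 h)] at this
    linarith
  · have := hB.slope_lt_of_hasDerivAt hy hx h (hBg x hx)
    rw [slope_def_field, div_lt_iff₀ (sub_pos.2 h)] at this
    linarith

lemma StrictConvexOn.bregmanDiv_nonneg (hB : StrictConvexOn ℝ M B)
    (hBg : ∀ x ∈ M, HasDerivAt B (g x) x) (hx : x ∈ M) (hy : y ∈ M) :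
    0 ≤ bregmanDiv B g y x := by
  rcases eq_or_ne x y with rfl | h
  · simp [bregmanDiv]
  · exact (hB.bregmanDiv_pos hBg hx hy h).le

lemma StrictConvexOn.bregmanDiv_le_bregmanDiv (hB : StrictConvexOn ℝ M B)
    (hBg : ∀ x ∈ M, HasDerivAt B (g x) x) (hx : x ∈ M) (hy : y ∈ M) (hz : z ∈ M)
    (hxy : x ≤ y) (hyz : y ≤ z) : bregmanDiv B g y x ≤ bregmanDiv B g z x := by
  rw [← bregmanDiv_add_bregmanDiv B g x y z]
  have hgxy := (hB.strictMonoOn_of_hasDerivAt hBg).monotoneOn hx hy hxy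
  have := mul_nonneg (sub_nonneg.2 hgxy) (sub_nonneg.2 hyz)
  linarith [hB.bregmanDiv_nonneg hBg hy hz]

lemma ConcaveOn.slope_mul_sq_div_two_le_bregmanDiv (hg : ConcaveOn ℝ M g)
    (hBg : ∀ x ∈ M, HasDerivAt B (g x) x) (hx : x ∈ M) (hy : y ∈ M) (hxy : x < y) :
    slope g x y * (y - x) ^ 2 / 2 ≤ bregmanDiv B g y x := by
  have hIcc : Icc x y ⊆ M := hg.1.ordConnected.out hx hy
  have hchord : ∀ s ∈ Icc x y, g x + slope g x y * (s - x) ≤ g s := by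
    rintro s ⟨hxs, hsy⟩
    rcases hxs.eq_or_lt with rfl | hxs
    · simp
    have := hg.antitoneOn_slope_gt hx ⟨hIcc ⟨hxs.le, hsy⟩, hxs⟩ ⟨hy, hxy⟩ hsy
    rw [slope_def_field (a := x) (b := s), le_div_iff₀ (sub_pos.2 hxs)] at this
    linarith
  have := sub_le_sub_of_hasDerivAt_le hxy.le
    (fun s _ => hasDerivAt_affine_antideriv (g x) (slope g x y) x s)
    (fun s hs => hBg s (hIcc hs)) hchord
  simp only [sub_self] at this
  unfold bregmanDiv
  linarith

lemma ConcaveOn.bregmanDiv_le_sub_slope_mul_sq (hg : ConcaveOn ℝ M g)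
    (hBg : ∀ x ∈ M, HasDerivAt B (g x) x) (hx : x ∈ M) (hz : z ∈ M) (hxy : x ≤ y)
    (hyz : y < z) :
    bregmanDiv B g y x ≤ (g y - g x) * (y - x) - slope g y z * (y - x) ^ 2 / 2 := by
  have hIcc : Icc x z ⊆ M := hg.1.ordConnected.out hx hz
  have hy : y ∈ M := hIcc ⟨hxy, hyz.le⟩
  have hchord : ∀ s ∈ Icc x y, g s ≤ g y - slope g y z * (y - s) := by
    rintro s ⟨hxs, hsy⟩
    rcases hsy.eq_or_lt with rfl | hsy
    · simp
    have := hg.slope_anti hy ⟨hIcc ⟨hxs, hsy.le.trans hyz.le⟩, hsy.ne⟩ ⟨hz, hyz.ne'⟩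
      (hsy.trans hyz).le
    rw [slope_def_field (a := y) (b := s), le_div_iff_of_neg (sub_neg.2 hsy)] at this
    linarith
  have := sub_le_sub_of_hasDerivAt_le hxy (fun s hs => hBg s (hIcc ⟨hs.1, hs.2.trans hyz.le⟩))
    (fun s _ => hasDerivAt_affine_antideriv (g y - slope g y z * (y - x)) (slope g y z) x s)
    (fun s hs => by linarith [hchord s hs])
  simp only [sub_self] at this
  unfold bregmanDiv
  linarith

variable {a b a₁ b₁ : ℝ}

lemma StrictConvexOn.le_of_bregmanDiv_eq (hB : StrictConvexOn ℝ M B)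
    (hBg : ∀ x ∈ M, HasDerivAt B (g x) x) (ha : a ∈ M) (hb : b ∈ M) (ha₁ : a₁ ∈ M)
    (hb₁ : b₁ ∈ M) (hab : a < b) (hbb₁ : b ≤ b₁)
    (heq : bregmanDiv B g a₁ a = bregmanDiv B g b₁ b) : a₁ ≤ b₁ := by
  by_contra! hb₁a₁
  have hsplit := bregmanDiv_add_bregmanDiv B g a b a₁
  have hDba := hB.bregmanDiv_pos hBg ha hb hab.ne
  have hDb := hB.bregmanDiv_le_bregmanDiv hBg hb hb₁ ha₁ hbb₁ hb₁a₁.le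
  have hgab := (hB.strictMonoOn_of_hasDerivAt hBg).monotoneOn ha hb hab.le
  have := mul_nonneg (sub_nonneg.2 hgab) (by linarith : 0 ≤ a₁ - b)
  linarith

lemma ConcaveOn.sub_le_sub_of_bregmanDiv_eq_of_le (hg : ConcaveOn ℝ M g)
    (hmono : MonotoneOn g M) (hBg : ∀ x ∈ M, HasDerivAt B (g x) x) (ha : a ∈ M) (hb : b ∈ M)
    (ha₁ : a₁ ∈ M) (hb₁ : b₁ ∈ M) (haa₁ : a < a₁) (hbb₁ : b < b₁) (ha₁b : a₁ ≤ b)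
    (heq : bregmanDiv B g a₁ a = bregmanDiv B g b₁ b) : g b₁ - g b ≤ g a₁ - g a := by
  by_contra! hlt
  have hlow := hg.slope_mul_sq_div_two_le_bregmanDiv (B := B) hBg hb hb₁ hbb₁
  have hupp := hg.bregmanDiv_le_sub_slope_mul_sq (B := B) hBg ha hb₁ haa₁.le (ha₁b.trans_lt hbb₁)
  have hslope : slope g b b₁ ≤ slope g a₁ b₁ := by
    rw [slope_comm g b, slope_comm g a₁]
    exact hg.antitoneOn_slope_lt hb₁ ⟨ha₁, ha₁b.trans_lt hbb₁⟩ ⟨hb, hbb₁⟩ ha₁b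
  have hk : (b₁ - b) * slope g b b₁ = g b₁ - g b := sub_smul_slope g b b₁
  have hk₀ := hmono.slope_nonneg hb hb₁
  -- With `k = slope g b b₁` the two bounds give
  -- `k ((a₁ - a)² + (b₁ - b)²) / 2 ≤ (g a₁ - g a) (a₁ - a) < k (a₁ - a) (b₁ - b)`, against AM-GM.
  nlinarith [sq_nonneg (a₁ - a - (b₁ - b)), mul_le_mul_of_nonneg_right hslope (sq_nonneg (a₁ - a))]

lemma ConcaveOn.sub_le_sub_of_bregmanDiv_eq_of_lt (hg : ConcaveOn ℝ M g)
    (hmono : MonotoneOn g M) (hBg : ∀ x ∈ M, HasDerivAt B (g x) x) (ha : a ∈ M) (hb : b ∈ M)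
    (ha₁ : a₁ ∈ M) (hb₁ : b₁ ∈ M) (hab : a < b) (hba₁ : b < a₁) (ha₁b₁ : a₁ ≤ b₁)
    (heq : bregmanDiv B g a₁ a = bregmanDiv B g b₁ b) : g b₁ - g b ≤ g a₁ - g a := by
  by_contra! hlt
  have hgab := hmono ha hb hab.le
  have hlt₁ : a₁ < b₁ := ha₁b₁.lt_of_ne fun h => by subst h; linarith
  have hsplit_a := bregmanDiv_add_bregmanDiv B g a b a₁
  have hsplit_b := bregmanDiv_add_bregmanDiv B g b a₁ b₁
  have hupp := hg.bregmanDiv_le_sub_slope_mul_sq (B := B) hBg ha ha₁ hab.le hba₁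
  have hlow := hg.slope_mul_sq_div_two_le_bregmanDiv (B := B) hBg ha₁ hb₁ hlt₁
  have hslope : slope g a₁ b₁ ≤ slope g b a₁ := by
    rw [slope_comm g b]
    exact hg.slope_anti ha₁ ⟨hb, hba₁.ne⟩ ⟨hb₁, hlt₁.ne'⟩ (hba₁.trans hlt₁).le
  set σ := slope g b a₁
  set ρ := slope g a₁ b₁
  have hσ : (a₁ - b) * σ = g a₁ - g b := sub_smul_slope g b a₁
  have hρ : (b₁ - a₁) * ρ = g b₁ - g a₁ := sub_smul_slope g a₁ b₁
  have hρ₀ : 0 ≤ ρ := hmono.slope_nonneg ha₁ hb₁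
  have hG : (g a₁ - g b) * (b₁ - a₁) = σ * (a₁ - b) * (b₁ - a₁) := by rw [← hσ]; ring
  have key : ρ * (b₁ - a₁) ^ 2 / 2 + σ * (a₁ - b) * (b₁ - a₁)
      ≤ (g b - g a) * (b - a) + (g b - g a) * (a₁ - b) - σ * (b - a) ^ 2 / 2 := by
    linarith
  have hRc : g b - g a < (b₁ - a₁) * ρ := by linarith
  have hσw : 0 ≤ σ * (a₁ - b) := mul_nonneg (hρ₀.trans hslope) (sub_pos.2 hba₁).le
  -- Multiplying `key` by `σ`, then using `ρ ≤ σ` and `σ c u - σ² u² / 2 ≤ c² / 2` (`u = b - a`),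
  -- gives `R² / 2 + σ w R ≤ c² / 2 + σ w c` with `R = (b₁ - a₁) ρ > c = g b - g a ≥ 0`, `w = a₁ - b`.
  linarith [mul_le_mul_of_nonneg_left key (hρ₀.trans hslope),
    mul_nonneg (mul_nonneg (sub_nonneg.2 hslope) hρ₀) (sq_nonneg (b₁ - a₁)),
    mul_nonneg hσw (mul_nonneg (sub_nonneg.2 hslope) (sub_pos.2 hlt₁).le),
    sq_nonneg (g b - g a - σ * (b - a)),
    mul_pos (sub_pos.2 hRc) (by linarith : 0 < (b₁ - a₁) * ρ + (g b - g a)),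
    mul_nonneg hσw (sub_pos.2 hRc).le]

lemma ConcaveOn.sub_le_sub_of_bregmanDiv_eq (hg : ConcaveOn ℝ M g)
    (hmono : MonotoneOn g M) (hBg : ∀ x ∈ M, HasDerivAt B (g x) x) (ha : a ∈ M) (hb : b ∈ M)
    (ha₁ : a₁ ∈ M) (hb₁ : b₁ ∈ M) (hab : a < b) (haa₁ : a < a₁) (hbb₁ : b < b₁)
    (ha₁b₁ : a₁ ≤ b₁) (heq : bregmanDiv B g a₁ a = bregmanDiv B g b₁ b) :
    g b₁ - g b ≤ g a₁ - g a := by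
  rcases le_or_gt a₁ b with ha₁b | hba₁
  · exact hg.sub_le_sub_of_bregmanDiv_eq_of_le hmono hBg ha hb ha₁ hb₁ haa₁ hbb₁ ha₁b heq
  · exact hg.sub_le_sub_of_bregmanDiv_eq_of_lt hmono hBg ha hb ha₁ hb₁ hab hba₁ ha₁b₁ heq

lemma StrictConvexOn.mul_sub_le_mul_sub_of_bregmanDiv_eq (hB : StrictConvexOn ℝ M B)
    (hBg : ∀ x ∈ M, HasDerivAt B (g x) x) (ha : a ∈ M) (hb : b ∈ M) (ha₁ : a₁ ∈ M)
    (hb₁ : b₁ ∈ M) (haa₁ : a ≤ a₁) (hbb₁ : b ≤ b₁) (ha₁b₁ : a₁ ≤ b₁)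
    (heq : bregmanDiv B g a₁ a = bregmanDiv B g b₁ b) :
    (g a₁ - g a) * (a₁ - b) ≤ (g b₁ - g b) * (b₁ - b) := by
  have hmono := (hB.strictMonoOn_of_hasDerivAt hBg).monotoneOn
  have hgaa₁ := hmono ha ha₁ haa₁
  have hgbb₁ := hmono hb hb₁ hbb₁
  rcases le_or_gt a₁ b with ha₁b | hba₁
  · exact (mul_nonpos_of_nonneg_of_nonpos (sub_nonneg.2 hgaa₁) (sub_nonpos.2 ha₁b)).trans
      (mul_nonneg (sub_nonneg.2 hgbb₁) (sub_nonneg.2 hbb₁))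
  · have hDba := hB.bregmanDiv_nonneg hBg ha hb
    have hDa₁b₁ := hB.bregmanDiv_nonneg hBg hb₁ ha₁
    have := mul_nonneg (sub_nonneg.2 (hmono ha₁ hb₁ ha₁b₁)) (sub_pos.2 hba₁).le
    unfold bregmanDiv at *
    linarith

theorem antitoneOn_sub_mul_sub_of_bregmanDiv_eq (hB : StrictConvexOn ℝ M B)
    (hBg : ∀ x ∈ M, HasDerivAt B (g x) x) (hg : ConcaveOn ℝ M g) {xbar d : ℝ} {μ1 : ℝ → ℝ}
    (hμ1 : ∀ μ0 ∈ M ∩ Iic xbar, μ1 μ0 ∈ M ∧ μ0 < μ1 μ0 ∧ bregmanDiv B g (μ1 μ0) μ0 = d) :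
    AntitoneOn (fun μ0 => (g (μ1 μ0) - g μ0) * (xbar - μ1 μ0)) (M ∩ Iic xbar) := by
  rintro a ⟨ha, hax⟩ b ⟨hb, hbx⟩ hab
  obtain ⟨ha₁, haa₁, hda⟩ := hμ1 a ⟨ha, hax⟩
  obtain ⟨hb₁, hbb₁, hdb⟩ := hμ1 b ⟨hb, hbx⟩
  rcases hab.eq_or_lt with rfl | hab
  · rfl
  have heq := hda.trans hdb.symm
  have ha₁b₁ := hB.le_of_bregmanDiv_eq hBg ha hb ha₁ hb₁ hab hbb₁.le heq
  have hslope := hg.sub_le_sub_of_bregmanDiv_eq (hB.strictMonoOn_of_hasDerivAt hBg).monotoneOn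
    hBg ha hb ha₁ hb₁ hab haa₁ hbb₁ ha₁b₁ heq
  have hwidth := hB.mul_sub_le_mul_sub_of_bregmanDiv_eq hBg ha hb ha₁ hb₁ haa₁.le hbb₁.le
    ha₁b₁ heq
  have := mul_le_mul_of_nonneg_right hslope (sub_nonneg.2 hbx)
  dsimp only
  linarith

end Bregman

theorem ef_like_lr_antitone_general
    (M : Set ℝ)
    (Bs Bs' : ℝ → ℝ)
    (hBs_conv : StrictConvexOn ℝ M Bs)
    (hBs_deriv : ∀ x ∈ M, HasDerivAt Bs (Bs' x) x)
    (hBs'_concave : ConcaveOn ℝ M Bs')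
    (n : ℕ) (xbar d : ℝ)
    (μ1 : ℝ → ℝ)
    (hμ1 : ∀ μ0 ∈ M ∩ Set.Iic xbar, μ1 μ0 ∈ M ∧ μ0 < μ1 μ0 ∧
      Bs (μ1 μ0) - Bs μ0 - Bs' μ0 * (μ1 μ0 - μ0) = d) :
    AntitoneOn
      (fun μ0 => Real.exp (n * (d + (Bs' (μ1 μ0) - Bs' μ0) * (xbar - μ1 μ0))))
      (M ∩ Set.Iic xbar) := by
  intro a ha b hb hab
  have := antitoneOn_sub_mul_sub_of_bregmanDiv_eq hBs_conv hBs_deriv hBs'_concave hμ1 ha hb hab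
  exact exp_le_exp.2 (mul_le_mul_of_nonneg_left (by linarith) n.cast_nonneg)

/-- **Proposition 1 (EF-like sub-B families with convex `∇B` have monotone LR-like statistics
in the null parameter).** Here `Bs = B*` is the convex conjugate of `B` and `Bs'` its
derivative on the open convex mean space `M`; convexity of `∇B` is equivalent to concavity
of `∇B* = Bs'`. For `μ0 ∈ M` with `μ0 ≤ x̄`, `μ1 μ0 > μ0` is defined by
`D_{B*}(μ1(μ0), μ0) = d`, and the map `μ0 ↦ L_n(μ1(μ0), μ0)` is nonincreasing on
`(-∞, x̄] ∩ M`. -/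
theorem ef_like_lr_antitone
    (M : Set ℝ) (hM : IsOpen M) (hMc : Convex ℝ M)
    (Bs Bs' : ℝ → ℝ)
    (hBs_conv : StrictConvexOn ℝ M Bs)
    (hBs_deriv : ∀ x ∈ M, HasDerivAt Bs (Bs' x) x)
    (hBs'_concave : ConcaveOn ℝ M Bs')
    (n : ℕ) (hn : 1 ≤ n) (xbar d : ℝ) (hd : 0 < d)
    (μ1 : ℝ → ℝ)
    (hμ1 : ∀ μ0 ∈ M ∩ Set.Iic xbar, μ1 μ0 ∈ M ∧ μ0 < μ1 μ0 ∧
      Bs (μ1 μ0) - Bs μ0 - Bs' μ0 * (μ1 μ0 - μ0) = d) :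
    AntitoneOn
      (fun μ0 => Real.exp (n * (d + (Bs' (μ1 μ0) - Bs' μ0) * (xbar - μ1 μ0))))
      (M ∩ Set.Iic xbar) :=
  ef_like_lr_antitone_general M Bs Bs' hBs_conv hBs_deriv hBs'_concave n xbar d μ1 hμ1
end

section
/- Let t > 1, η > 1, m ≥ 1, d > 0 and w ∈ (0,1) be real numbers. If d ≤ η·log(1/w)/t + 2η·log(m + log_η t)/t, then t ≤ (2η/d)·log( 2m + 2 + 2·log_η(2/log η) + 2·max(log_η(1/d), 0) ) + (2η/d)·log(1/w). -/
open Real Set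

lemma aux_log_le (z : ℝ) (hz : 0 < z) : Real.exp 1 * Real.log z ≤ z := by
  have h := Real.log_le_sub_one_of_pos (show 0 < z / Real.exp 1 by positivity)
  rw [Real.log_div hz.ne' (Real.exp_ne_zero 1), Real.log_exp] at h
  have hE : (0:ℝ) < Real.exp 1 := Real.exp_pos 1
  have : Real.log z ≤ z / Real.exp 1 := by linarith
  calc Real.exp 1 * Real.log z ≤ Real.exp 1 * (z / Real.exp 1) :=
        mul_le_mul_of_nonneg_left this hE.le
    _ = z := by field_simp

lemma aux_sq_le_exp (x : ℝ) (hx : 0 ≤ x) : x ^ 2 ≤ Real.exp x := by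
  rcases eq_or_lt_of_le hx with h | h
  · simp [← h, Real.exp_nonneg]
  · have h1 := aux_log_le x h
    have hE : (2:ℝ) < Real.exp 1 := by linarith [Real.exp_one_gt_d9]
    have h3 : 2 * Real.log x ≤ x := by
      rcases le_or_gt (Real.log x) 0 with hl | hl
      · linarith
      · nlinarith
    have e1 : Real.log (x ^ 2) = 2 * Real.log x := by
      rw [Real.log_pow]; norm_num
    calc x ^ 2 = Real.exp (Real.log (x ^ 2)) := (Real.exp_log (by positivity)).symm
      _ = Real.exp (2 * Real.log x) := by rw [e1]
      _ ≤ Real.exp x := Real.exp_le_exp.mpr h3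

lemma aux_quad_le_exp (z : ℝ) (hz : 0 ≤ z) : 1 + z + 3/8 * z ^ 2 ≤ Real.exp z := by
  have h := Real.add_one_le_exp (z/4)
  have h1 : (0:ℝ) ≤ 1 + z/4 := by linarith
  have h2 : (1 + z/4) ^ 4 ≤ Real.exp (z/4) ^ 4 := by
    apply pow_le_pow_left₀ h1 (by linarith) 4
  have h3 : Real.exp (z/4) ^ 4 = Real.exp z := by
    rw [← Real.exp_nat_mul]; ring_nf
  nlinarith [pow_nonneg hz 3, pow_nonneg hz 4]

set_option maxHeartbeats 1000000 in
lemma aux_key (x q : ℝ) (hx : 0 < x) (hq : 3 ≤ q) :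
    x ^ 2 * Real.exp x * Real.log (2 * q + 2 * ((Real.log 2 - Real.log x) / x)) ≤
      Real.exp (q * x) := by
  set c : ℝ := (Real.log 2 - Real.log x) / x with hcdef
  have hl2 : Real.log 2 < 0.6931471808 := Real.log_two_lt_d9
  have hl2p : 0 < Real.log 2 := Real.log_pos one_lt_two
  have hE : (0:ℝ) < Real.exp 1 := Real.exp_pos 1
  have hexpos : (0:ℝ) < Real.exp x := Real.exp_pos x
  rcases le_total x 1 with hx1 | hx1
  · -- case x ≤ 1
    have hlx : Real.log x ≤ 0 := Real.log_nonpos hx.le hx1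
    have hc0 : 0 < c := div_pos (by linarith) hx
    have hq0 : (0:ℝ) < q := by linarith
    have hsplit : Real.log (2*q + 2*c) ≤ Real.log (2*q) + c / q := by
      have e1 : 2*q + 2*c = (2*q) * (1 + c/q) := by field_simp
      have hw : (0:ℝ) < 1 + c/q := by positivity
      rw [e1, Real.log_mul (by positivity) hw.ne']
      have := Real.log_le_sub_one_of_pos hw
      linarith
    have hlq : Real.exp 1 * Real.log (2*q) ≤ 2*q := aux_log_le _ (by linarith)
    have hxc : Real.exp 1 * (x * (Real.log 2 - Real.log x)) ≤ 2 := by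
      have h1 := aux_log_le (2/x) (by positivity)
      rw [Real.log_div two_ne_zero hx.ne'] at h1
      have h2 := mul_le_mul_of_nonneg_left h1 hx.le
      have h3 : x * (2/x) = 2 := by field_simp
      nlinarith [h2, h3]
    have hex1 : Real.exp x ≤ Real.exp 1 := Real.exp_le_exp.mpr hx1
    have hlogq0 : 0 ≤ Real.log (2*q) := Real.log_nonneg (by linarith)
    -- term 1 : x^2 * exp x * log (2q) ≤ 2*q*x^2
    have t1 : x^2 * Real.exp x * Real.log (2*q) ≤ 2*q*x^2 := by
      have a1 : Real.exp x * Real.log (2*q) ≤ 2*q :=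
        le_trans (mul_le_mul_of_nonneg_right hex1 hlogq0) hlq
      have a2 : x^2 * (Real.exp x * Real.log (2*q)) ≤ x^2 * (2*q) :=
        mul_le_mul_of_nonneg_left a1 (sq_nonneg x)
      nlinarith [a2]
    -- term 2 : x^2 * exp x * (c/q) ≤ 2/3
    have t2 : x^2 * Real.exp x * (c/q) ≤ 2/3 := by
      have b1 : x^2 * c = x * (Real.log 2 - Real.log x) := by
        rw [hcdef]; field_simp
      have b2 : Real.exp 1 * (x^2 * c) ≤ 2 := by rw [b1]; exact hxc
      have b3 : 0 ≤ x^2 * c := by positivity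
      have b4 : Real.exp x * (x^2 * c) ≤ 2 :=
        le_trans (mul_le_mul_of_nonneg_right hex1 b3) b2
      have b5 : x^2 * Real.exp x * (c/q) = (Real.exp x * (x^2 * c)) / q := by ring
      rw [b5]
      rw [div_le_iff₀ hq0]
      nlinarith [b4, Real.exp_pos x, b3]
    have hquad := aux_quad_le_exp (q*x) (by positivity)
    have hpos2 : (0:ℝ) ≤ x^2 * Real.exp x := by positivity
    have t0 : x^2 * Real.exp x * Real.log (2*q+2*c) ≤
        x^2 * Real.exp x * Real.log (2*q) + x^2 * Real.exp x * (c/q) := by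
      nlinarith [mul_le_mul_of_nonneg_left hsplit hpos2]
    -- polynomial part : 2*q*x^2 + 2/3 ≤ 1 + q*x + 3/8*(q*x)^2
    have poly : 2*q*x^2 + 2/3 ≤ 1 + q*x + 3/8*(q*x)^2 := by
      nlinarith [mul_nonneg (mul_nonneg hq0.le hx.le) (by linarith : (0:ℝ) ≤ 1 - (7/8)*x),
        mul_nonneg (mul_nonneg hq0.le (sq_nonneg x)) (by linarith : (0:ℝ) ≤ q - 3)]
    linarith
  · -- case 1 ≤ x
    have hlx : 0 ≤ Real.log x := Real.log_nonneg hx1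
    have hxlog := Real.log_le_sub_one_of_pos hx
    have hcle : c ≤ 1 := by
      rw [hcdef, div_le_one hx]; linarith
    have hcge : -1 ≤ c := by
      rw [hcdef, le_div_iff₀ hx]; linarith
    have hpos : (0:ℝ) < 2*q + 2*c := by linarith
    have h1 : Real.log (2*q+2*c) ≤ Real.log (2*q+2) :=
      Real.log_le_log hpos (by linarith)
    have h8 : Real.log (2*q+2) ≤ 3*Real.log 2 + (q-3)/4 := by
      have e1 : 2*q+2 = 8 * ((q+1)/4) := by ring
      have hw : (0:ℝ) < (q+1)/4 := by linarith
      have hl8 : Real.log 8 = 3 * Real.log 2 := by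
        rw [show (8:ℝ) = 2^(3:ℕ) by norm_num, Real.log_pow]; push_cast; ring
      rw [e1, Real.log_mul (by norm_num) hw.ne']
      have h2 := Real.log_le_sub_one_of_pos hw
      linarith [hl8, h2]
    have hquad := aux_quad_le_exp (q-2) (by linarith)
    have h9 : 3*Real.log 2 + (q-3)/4 ≤ Real.exp (q-2) := by
      nlinarith [hquad, sq_nonneg (q-3)]
    have hC : Real.log (2*q+2*c) ≤ Real.exp (q-2) := h1.trans (h8.trans h9)
    have hsq := aux_sq_le_exp x hx.le
    have hfin : x^2 * Real.exp x * Real.exp (q-2) ≤ Real.exp (q*x) := by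
      have a3 : x + (x + (q-2)) ≤ q*x := by
        nlinarith [mul_nonneg (by linarith : (0:ℝ) ≤ q - 2) (by linarith : (0:ℝ) ≤ x - 1)]
      have a1 : x^2 * Real.exp x * Real.exp (q-2) ≤ Real.exp x * (Real.exp x * Real.exp (q-2)) := by
        nlinarith [mul_le_mul_of_nonneg_right (mul_le_mul_of_nonneg_right hsq hexpos.le)
          (Real.exp_pos (q-2)).le]
      have a2 : Real.exp x * (Real.exp x * Real.exp (q-2)) ≤ Real.exp (q*x) := by
        rw [← Real.exp_add, ← Real.exp_add]
        exact Real.exp_le_exp.mpr a3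
      linarith
    have hmul := mul_le_mul_of_nonneg_left hC (show (0:ℝ) ≤ x^2 * Real.exp x by positivity)
    nlinarith [hmul, hfin]

set_option maxHeartbeats 1000000 in
lemma aux_claim2 (η m d s : ℝ) (hη : 1 < η) (hm : 1 ≤ m) (hd : 0 < d) (hs : 0 < s)
    (hM : m + 2 + 2 * Real.logb η (2 / Real.log η) + 2 * max (Real.logb η (1 / d)) 0 < s) :
    4 * η * Real.log (m + s) ≤ d * η ^ s := by
  have hη0 : (0:ℝ) < η := by linarith
  have hx : 0 < Real.log η := Real.log_pos hη
  set x := Real.log η with hxdef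
  set p := max (Real.logb η (1/d)) 0 with hpdef
  have hp0 : 0 ≤ p := le_max_right _ _
  have hcc : Real.logb η (2 / Real.log η) = (Real.log 2 - Real.log x) / x := by
    rw [Real.logb, Real.log_div two_ne_zero hx.ne']
  set c : ℝ := (Real.log 2 - Real.log x) / x with hcdef
  rw [hcc] at hM
  set q : ℝ := s - 2*c - p with hqdef
  have hqge : 3 ≤ q := by rw [hqdef]; linarith
  have hsum : s = 2*c + (p + q) := by rw [hqdef]; ring
  have hrw : η ^ s = η ^ (2*c) * (η ^ p * η ^ q) := by
    rw [hsum, Real.rpow_add hη0, Real.rpow_add hη0]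
  have h2c : η ^ (2*c) = 4 / x^2 := by
    rw [Real.rpow_def_of_pos hη0]
    have e1 : Real.log η * (2*c) = Real.log ((2/x)^(2:ℕ)) := by
      rw [Real.log_pow, Real.log_div two_ne_zero hx.ne', hcdef, ← hxdef]
      push_cast
      field_simp
    rw [e1, Real.exp_log (by positivity)]
    field_simp
    ring
  have hpd : 1 ≤ d * η ^ p := by
    rcases le_or_gt d 1 with hd1 | hd1
    · have h1d : (0:ℝ) < 1/d := by positivity
      have e2 : η ^ Real.logb η (1/d) = 1/d := Real.rpow_logb hη0 hη.ne' h1d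
      have e3 : η ^ Real.logb η (1/d) ≤ η ^ p :=
        (Real.rpow_le_rpow_left_iff hη).mpr (le_max_left _ _)
      rw [e2] at e3
      -- 1/d ≤ η^p  ⇒  1 ≤ d * η^p
      have := mul_le_mul_of_nonneg_left e3 hd.le
      rw [mul_one_div, div_self hd.ne'] at this
      exact this
    · have h1 : (1:ℝ) ≤ η ^ p := by
        have : η ^ (0:ℝ) ≤ η ^ p := (Real.rpow_le_rpow_left_iff hη).mpr hp0
        rwa [Real.rpow_zero] at this
      nlinarith
  have hqx : η ^ q = Real.exp (q * x) := by
    rw [Real.rpow_def_of_pos hη0, ← hxdef, mul_comm]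
  have hppos : (0:ℝ) < η ^ p := Real.rpow_pos_of_pos hη0 p
  have hlb : 4 / x^2 * Real.exp (q*x) ≤ d * η ^ s := by
    rw [hrw, h2c, hqx]
    have e4 : d * (4 / x^2 * (η ^ p * Real.exp (q*x))) =
        (4 / x^2 * Real.exp (q*x)) * (d * η ^ p) := by ring
    rw [e4]
    nlinarith [hpd, Real.exp_pos (q*x), sq_nonneg x,
      mul_pos (show (0:ℝ) < 4/x^2 by positivity) (Real.exp_pos (q*x))]
  have hms : (0:ℝ) < m + s := by linarith
  have hub1 : Real.log (m+s) ≤ Real.log (2*q + 2*c) := by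
    apply Real.log_le_log hms
    rw [hqdef]; linarith
  have hkey := aux_key x q hx hqge
  rw [← hcdef] at hkey
  have hηexp : η = Real.exp x := (Real.exp_log hη0).symm
  have h4 : 4 * η * Real.log (m+s) ≤ 4 * η * Real.log (2*q+2*c) :=
    mul_le_mul_of_nonneg_left hub1 (by positivity)
  have h5 : 4 * η * Real.log (2*q+2*c) ≤ 4 / x^2 * Real.exp (q*x) := by
    rw [hηexp]
    rw [div_mul_eq_mul_div, le_div_iff₀ (show (0:ℝ) < x^2 by positivity)]
    nlinarith [hkey]
  linarith

/-- **Lemma 2 (inversion of an iterated-logarithm implicit bound).** -/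
theorem inversion_lemma
    (t η m d w : ℝ) (ht : 1 < t) (hη : 1 < η) (hm : 1 ≤ m) (hd : 0 < d)
    (hw : w ∈ Set.Ioo (0 : ℝ) 1)
    (h : d ≤ η * Real.log (1 / w) / t + 2 * η * Real.log (m + Real.logb η t) / t) :
    t ≤ 2 * η / d *
          Real.log (2 * m + 2 + 2 * Real.logb η (2 / Real.log η) +
            2 * max (Real.logb η (1 / d)) 0) +
        2 * η / d * Real.log (1 / w) := by
  obtain ⟨hw0, hw1⟩ := hw
  have ht0 : (0:ℝ) < t := by linarith
  have hη0 : (0:ℝ) < η := by linarith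
  have hx : 0 < Real.log η := Real.log_pos hη
  have hs : 0 < Real.logb η t := Real.logb_pos hη ht
  set s := Real.logb η t with hsdef
  set L := Real.log (1/w) with hLdef
  have hL : 0 < L := Real.log_pos (by rw [lt_div_iff₀ hw0]; linarith)
  set B := 2*m + 2 + 2*Real.logb η (2/Real.log η) + 2*max (Real.logb η (1/d)) 0 with hBdef
  have hp0 : 0 ≤ max (Real.logb η (1/d)) 0 := le_max_right _ _
  have hcge : -1 ≤ Real.logb η (2/Real.log η) := by
    rw [Real.logb, Real.log_div two_ne_zero hx.ne', le_div_iff₀ hx]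
    have h1 := Real.log_le_sub_one_of_pos hx
    have h2 := Real.log_pos one_lt_two
    linarith
  have hB1 : 1 < B := by rw [hBdef]; linarith
  have hB0 : (0:ℝ) < B := by linarith
  have hlogB : 0 < Real.log B := Real.log_pos hB1
  by_contra hcon
  push_neg at hcon
  have k1 : 2*η*Real.log B + 2*η*L < d*t := by
    have h1 := mul_lt_mul_of_pos_left hcon hd
    have e : d * (2*η/d*Real.log B + 2*η/d*L) = 2*η*Real.log B + 2*η*L := by
      field_simp
    rw [e] at h1
    exact h1
  have h2 : d*t ≤ η*L + 2*η*Real.log (m+s) := by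
    have h1 := mul_le_mul_of_nonneg_right h ht0.le
    have e : (η*L/t + 2*η*Real.log (m+s)/t) * t = η*L + 2*η*Real.log (m+s) := by
      field_simp
    rw [e] at h1
    exact h1
  have hlt : Real.log B < Real.log (m+s) := by
    nlinarith [k1, h2, mul_pos hη0 hL, hη0]
  have hms : (0:ℝ) < m + s := by linarith
  have hBms : B < m + s := by
    rw [← Real.exp_log hB0, ← Real.exp_log hms]
    exact Real.exp_lt_exp.mpr hlt
  have hM : m + 2 + 2*Real.logb η (2/Real.log η) + 2*max (Real.logb η (1/d)) 0 < s := by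
    rw [hBdef] at hBms; linarith
  have hc2 := aux_claim2 η m d s hη hm hd hs hM
  have hts : η ^ s = t := by rw [hsdef]; exact Real.rpow_logb hη0 hη.ne' ht0
  rw [hts] at hc2
  nlinarith [hc2, k1, h2, mul_pos hη0 hlogB, mul_pos hη0 hL]
end

section
/- Let D > 0, α ∈ (0,1] and η > 1 be real numbers. If g > 0 satisfies g ≤ η·log( log(η·max(g/D, 1)) / (α·log η) ), then g ≤ η·log( (1/α)·( 1 + 2·log_η( max( η^{3/2}/(α·D·log η), 1 ) ) ) ). Consequently, the smallest constant boundary g_α making [1 + log_η(max(g/D, 1))]·e^{−g/η} ≤ α is bounded above by inf_{η>1} η·log( (1/α)·( 1 + 2·log_η( max( η^{3/2}/(α·D·log η), 1 ) ) ) ). -/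
open Real Set

noncomputable section

/-!
Put `x = g / D`, `t = g / η` and `y = η x`, so that the implicit inequality reads
`α log η · eᵗ ≤ log y`. Multiplying by `t` and using `t ≤ eᵗ`, `log y ≤ √y` gives
`α log η · t ≤ √y`, which squares to `x ≤ (η^{3/2} / (α D log η))²` as soon as `x > 1`.
Hence `log_η (max x 1) ≤ 2 log_η (max (η^{3/2} / (α D log η)) 1)`, and the implicit bound on `g`
becomes the explicit one. Every `g` above the explicit bound therefore satisfies the crossing
inequality, which bounds the infimum for each `η` and hence the infima over `η`.
-/

namespace Real

lemma log_le_sqrt {y : ℝ} (hy : 0 < y) : log y ≤ √y := by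
  have h := two_mul_le_exp (x := log √y)
  rwa [exp_log (sqrt_pos.2 hy), log_sqrt hy.le, mul_div_cancel₀ _ two_ne_zero] at h

lemma mul_log_le_exp_mul_sqrt {t y : ℝ} (ht : 0 ≤ t) (hy : 0 < y) :
    t * log y ≤ exp t * √y := by
  rcases le_total 0 (log y) with hlog | hlog
  · have hexp : t ≤ exp t := by linarith [two_mul_le_exp (x := t)]
    exact mul_le_mul hexp (log_le_sqrt hy) hlog (exp_pos t).le
  · exact (mul_nonpos_of_nonneg_of_nonpos ht hlog).trans (by positivity)

lemma log_mul_eq_log_mul_one_add_logb {b x : ℝ} (hb : 0 < b) (hb₁ : b ≠ 1) (hx : x ≠ 0) :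
    log (b * x) = log b * (1 + logb b x) := by
  have hlog : log b ≠ 0 := log_ne_zero_of_pos_of_ne_one hb hb₁
  rw [log_mul hb.ne' hx, logb, mul_add, mul_one, mul_div_cancel₀ _ hlog]

lemma le_mul_log_one_div_mul_iff {α η c g : ℝ} (hα : 0 < α) (hη : 0 < η) (hc : 0 < c) :
    g ≤ η * log ((1 / α) * c) ↔ α * exp (g / η) ≤ c := by
  rw [← div_le_iff₀' hη, le_log_iff_exp_le (by positivity), one_div, le_inv_mul_iff₀ hα]

end Real

lemma div_le_sq_of_mul_exp_le_log {D α η g : ℝ} (hD : 0 < D) (hα : 0 < α) (hη : 1 < η)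
    (hg : 0 < g) (h : α * log η * exp (g / η) ≤ log (η * (g / D))) :
    g / D ≤ (η ^ ((3 : ℝ) / 2) / (α * D * log η)) ^ 2 := by
  have hη₀ : 0 < η := by linarith
  have hL : 0 < log η := log_pos hη
  have hy : 0 < η * (g / D) := by positivity
  have hlin : α * log η * (g / η) ≤ √(η * (g / D)) := by
    refine le_of_mul_le_mul_left ?_ (exp_pos (g / η))
    calc exp (g / η) * (α * log η * (g / η)) = g / η * (α * log η * exp (g / η)) := by ring
      _ ≤ g / η * log (η * (g / D)) := by gcongr
      _ ≤ exp (g / η) * √(η * (g / D)) := mul_log_le_exp_mul_sqrt (by positivity) hy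
  have hsq : (α * log η * (g / η)) ^ 2 ≤ η * (g / D) := (le_sqrt (by positivity) hy.le).1 hlin
  have hpow : (η ^ ((3 : ℝ) / 2)) ^ 2 = η ^ 3 := by
    rw [← rpow_natCast, ← rpow_mul hη₀.le]; norm_num
  rw [div_pow, hpow, le_div_iff₀ (by positivity)]
  field_simp at hsq
  calc g / D * (α * D * log η) ^ 2 = α ^ 2 * log η ^ 2 * g * D := by field_simp
    _ ≤ η ^ 3 := hsq

def explicitBoundary (D α η : ℝ) : ℝ :=
  η * log ((1 / α) * (1 + 2 * logb η (max (η ^ ((3 : ℝ) / 2) / (α * D * log η)) 1)))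

lemma logb_max_div_le_two_mul {D α η g : ℝ} (hD : 0 < D) (hα : 0 < α) (hη : 1 < η)
    (h : α * exp (g / η) ≤ 1 + logb η (max (g / D) 1)) :
    logb η (max (g / D) 1) ≤ 2 * logb η (max (η ^ ((3 : ℝ) / 2) / (α * D * log η)) 1) := by
  set M := max (η ^ ((3 : ℝ) / 2) / (α * D * log η)) 1
  have hM : 1 ≤ M := le_max_right _ _
  have hsM : max (g / D) 1 ≤ M ^ 2 := by
    rcases le_or_gt (g / D) 1 with hx | hx
    · rw [max_eq_right hx]
      exact one_le_pow₀ hM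
    · rw [max_eq_left hx.le] at h ⊢
      have hη₀ : 0 < η := by linarith
      have hL : 0 < log η := log_pos hη
      have hg : 0 < g := by linarith [(one_lt_div hD).1 hx]
      have hlog : α * log η * exp (g / η) ≤ log (η * (g / D)) := by
        rw [log_mul_eq_log_mul_one_add_logb hη₀ hη.ne' (by positivity), mul_comm α, mul_assoc]
        exact mul_le_mul_of_nonneg_left h hL.le
      exact (div_le_sq_of_mul_exp_le_log hD hα hη hg hlog).trans
        (pow_le_pow_left₀ (by positivity) (le_max_left _ _) 2)
  calc logb η (max (g / D) 1) ≤ logb η (M ^ 2) :=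
        (logb_le_logb hη (by positivity) (by positivity)).2 hsM
    _ = 2 * logb η M := by rw [logb_pow]; norm_num

lemma le_explicitBoundary {D α η g : ℝ} (hD : 0 < D) (hα : 0 < α) (hη : 1 < η)
    (h : α * exp (g / η) ≤ 1 + logb η (max (g / D) 1)) : g ≤ explicitBoundary D α η := by
  have hM := logb_nonneg hη (le_max_right (η ^ ((3 : ℝ) / 2) / (α * D * log η)) 1)
  rw [explicitBoundary, le_mul_log_one_div_mul_iff hα (by linarith) (by positivity)]
  linarith [logb_max_div_le_two_mul hD hα hη h]

lemma sInf_le_explicitBoundary {D α η : ℝ} (hD : 0 < D) (hα₀ : 0 < α) (hα₁ : α ≤ 1)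
    (hη : 1 < η) :
    sInf {g : ℝ | 0 < g ∧ (1 + logb η (max (g / D) 1)) * exp (-(g / η)) ≤ α} ≤
      explicitBoundary D α η := by
  have hB : 0 ≤ explicitBoundary D α η := by
    have hM := logb_nonneg hη (le_max_right (η ^ ((3 : ℝ) / 2) / (α * D * log η)) 1)
    have hα : 1 ≤ 1 / α := one_le_one_div hα₀ hα₁
    exact mul_nonneg (by linarith) (log_nonneg (by nlinarith))
  have hsub : Ioi (explicitBoundary D α η) ⊆
      {g : ℝ | 0 < g ∧ (1 + logb η (max (g / D) 1)) * exp (-(g / η)) ≤ α} := by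
    refine fun g hg => ⟨hB.trans_lt hg, not_lt.1 fun hcross => ?_⟩
    rw [exp_neg, ← div_eq_mul_inv, lt_div_iff₀ (exp_pos _)] at hcross
    exact (le_explicitBoundary hD hα₀ hη hcross.le).not_gt hg
  calc _ ≤ sInf (Ioi (explicitBoundary D α η)) :=
        csInf_le_csInf ⟨0, fun _ hg => hg.1.le⟩ nonempty_Ioi hsub
    _ = explicitBoundary D α η := csInf_Ioi

/-- **Upper bound on the constant boundary `g_α` (eq. (3.6)).** For each `η > 1`: any `g > 0`
satisfying the implicit inequality is bounded by the explicit expression; consequently the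
smallest constant boundary calibrating `[1 + log_η(max(g/D,1))]·e^{-g/η}` to level `α` is
bounded above, and taking infima over `η > 1` on both sides gives the stated bound. -/
theorem const_boundary_upper_bound
    (D α : ℝ) (hD : 0 < D) (hα : α ∈ Set.Ioc (0 : ℝ) 1) :
    (∀ η : ℝ, 1 < η → ∀ g : ℝ, 0 < g →
      g ≤ η * Real.log (Real.log (η * max (g / D) 1) / (α * Real.log η)) →
      g ≤ η * Real.log ((1 / α) *
            (1 + 2 * Real.logb η (max (η ^ ((3 : ℝ) / 2) / (α * D * Real.log η)) 1)))) ∧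
    (∀ η : ℝ, 1 < η →
      sInf {g : ℝ | 0 < g ∧
          (1 + Real.logb η (max (g / D) 1)) * Real.exp (-(g / η)) ≤ α}
        ≤ η * Real.log ((1 / α) *
            (1 + 2 * Real.logb η (max (η ^ ((3 : ℝ) / 2) / (α * D * Real.log η)) 1)))) ∧
    (⨅ η : {x : ℝ // 1 < x},
        sInf {g : ℝ | 0 < g ∧
          (1 + Real.logb η (max (g / D) 1)) * Real.exp (-(g / (η : ℝ))) ≤ α})
      ≤ ⨅ η : {x : ℝ // 1 < x},
          (η : ℝ) * Real.log ((1 / α) *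
            (1 + 2 * Real.logb η
              (max ((η : ℝ) ^ ((3 : ℝ) / 2) / (α * D * Real.log η)) 1))) := by
  obtain ⟨hα₀, hα₁⟩ := hα
  refine ⟨fun η hη g _ h => ?_, fun η hη => sInf_le_explicitBoundary hD hα₀ hα₁ hη,
    ciInf_mono ⟨0, ?_⟩ fun η => sInf_le_explicitBoundary hD hα₀ hα₁ η.2⟩
  · have hη₀ : 0 < η := by linarith
    have hc := logb_nonneg hη (le_max_right (g / D) 1)
    rw [log_mul_eq_log_mul_one_add_logb hη₀ hη.ne' (by positivity), mul_comm α,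
      mul_div_mul_left _ _ (log_pos hη).ne', div_eq_inv_mul, ← one_div,
      le_mul_log_one_div_mul_iff hα₀ hη₀ (by positivity)] at h
    exact le_explicitBoundary hD hα₀ hη h
  · rintro _ ⟨η, rfl⟩
    exact sInf_nonneg fun g hg => hg.1.le

end
end

section
/- For any real numbers g > 0 and r ∈ (0,1), inf_{η>1} ⌈log_η(1/r)⌉·e^{−g/η} = inf_{k∈ℕ} k·exp{ −g·r^{1/k} }. In particular, for 0 < D < g, inf_{η>1} ⌈log_η(g/D)⌉·e^{−g/η} = inf_{k∈ℕ} k·exp{ −g·(D/g)^{1/k} }, and for integers n_min < n_max, inf_{η>1} ⌈log_η(n_max/n_min)⌉·e^{−g/η} = inf_{k∈ℕ} k·exp{ −g·(n_min/n_max)^{1/k} }. -/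
open Real Set

noncomputable section

lemma stitched_key (g r : ℝ) (hg : 0 < g) (hr : r ∈ Set.Ioo (0 : ℝ) 1) :
    (⨅ η : {x : ℝ // 1 < x},
        (⌈Real.logb η (1 / r)⌉₊ : ℝ) * Real.exp (-(g / (η : ℝ))))
      = ⨅ k : {k : ℕ // 1 ≤ k},
          ((k : ℕ) : ℝ) * Real.exp (-(g * r ^ (1 / ((k : ℕ) : ℝ)))) := by
  obtain ⟨hr0, hr1⟩ := hr
  have hir : (1 : ℝ) < 1 / r := by rw [lt_div_iff₀ hr0]; simpa
  have hir0 : (0 : ℝ) < 1 / r := by positivity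
  have hinv : ∀ y : ℝ, ((1 / r) ^ y)⁻¹ = r ^ y := by
    intro y
    rw [one_div, Real.inv_rpow hr0.le, inv_inv]
  have hbdd1 : BddBelow (Set.range fun η : {x : ℝ // 1 < x} =>
      (⌈Real.logb η (1 / r)⌉₊ : ℝ) * Real.exp (-(g / (η : ℝ)))) := by
    refine ⟨0, ?_⟩
    rintro _ ⟨η, rfl⟩
    positivity
  have hbdd2 : BddBelow (Set.range fun k : {k : ℕ // 1 ≤ k} =>
      ((k : ℕ) : ℝ) * Real.exp (-(g * r ^ (1 / ((k : ℕ) : ℝ))))) := by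
    refine ⟨0, ?_⟩
    rintro _ ⟨k, rfl⟩
    positivity
  apply le_antisymm
  · -- LHS ≤ RHS : each k gives an η attaining the value
    refine le_ciInf ?_
    rintro ⟨k, hk⟩
    have hk0 : (0 : ℝ) < (k : ℝ) := by exact_mod_cast hk
    set η : ℝ := (1 / r) ^ (1 / (k : ℝ)) with hηdef
    have hη1 : 1 < η := by
      rw [hηdef]
      exact Real.one_lt_rpow_iff_of_pos hir0 |>.mpr (Or.inl ⟨hir, by positivity⟩)
    have hpow : η ^ (k : ℝ) = 1 / r := by
      rw [hηdef, ← Real.rpow_mul hir0.le, one_div_mul_cancel hk0.ne', Real.rpow_one]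
    have hlogb : Real.logb η (1 / r) = (k : ℝ) := by
      rw [← hpow, Real.logb_rpow (by linarith) (by linarith)]
    have hinvη : η⁻¹ = r ^ (1 / (k : ℝ)) := by rw [hηdef, hinv]
    have := ciInf_le hbdd1 (⟨η, hη1⟩ : {x : ℝ // 1 < x})
    simp only at this
    calc (⨅ η : {x : ℝ // 1 < x},
        (⌈Real.logb η (1 / r)⌉₊ : ℝ) * Real.exp (-(g / (η : ℝ))))
        ≤ (⌈Real.logb η (1 / r)⌉₊ : ℝ) * Real.exp (-(g / η)) := this
      _ = ((k : ℕ) : ℝ) * Real.exp (-(g * r ^ (1 / ((k : ℕ) : ℝ)))) := by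
          rw [hlogb, Nat.ceil_natCast, div_eq_mul_inv, hinvη]
  · -- RHS ≤ LHS
    refine le_ciInf ?_
    rintro ⟨η, hη⟩
    have hη0 : (0 : ℝ) < η := by linarith
    have hlpos : 0 < Real.logb η (1 / r) := Real.logb_pos hη hir
    set k : ℕ := ⌈Real.logb η (1 / r)⌉₊ with hkdef
    have hk1 : 1 ≤ k := Nat.ceil_pos.mpr hlpos
    have hk0 : (0 : ℝ) < (k : ℝ) := by exact_mod_cast hk1
    have hle : Real.logb η (1 / r) ≤ (k : ℝ) := Nat.le_ceil _
    have h1 : 1 / r ≤ η ^ (k : ℝ) := (Real.logb_le_iff_le_rpow hη hir0).mp hle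
    have h2 : (1 / r) ^ (1 / (k : ℝ)) ≤ η := by
      have := Real.rpow_le_rpow hir0.le h1 (by positivity : (0:ℝ) ≤ 1 / (k : ℝ))
      rwa [← Real.rpow_mul hη0.le, mul_one_div, div_self hk0.ne', Real.rpow_one] at this
    have h3 : η⁻¹ ≤ r ^ (1 / (k : ℝ)) := by
      rw [← hinv (1 / (k : ℝ))]
      exact inv_anti₀ (by positivity) h2
    have h4 : g / η ≤ g * r ^ (1 / (k : ℝ)) := by
      rw [div_eq_mul_inv]
      exact mul_le_mul_of_nonneg_left h3 hg.le
    have h5 : ((k : ℕ) : ℝ) * Real.exp (-(g * r ^ (1 / ((k : ℕ) : ℝ))))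
        ≤ (⌈Real.logb η (1 / r)⌉₊ : ℝ) * Real.exp (-(g / η)) := by
      rw [← hkdef]
      exact mul_le_mul_of_nonneg_left (Real.exp_le_exp.mpr (by linarith)) hk0.le
    exact le_trans (ciInf_le hbdd2 (⟨k, hk1⟩ : {k : ℕ // 1 ≤ k})) h5

/-- **Equivalent integer form of the stitched boundary-crossing bound (eqs. (3.5), (4.13)).** -/
theorem stitched_bound_integer_form :
    (∀ g r : ℝ, 0 < g → r ∈ Set.Ioo (0 : ℝ) 1 →
      (⨅ η : {x : ℝ // 1 < x},
          (⌈Real.logb η (1 / r)⌉₊ : ℝ) * Real.exp (-(g / (η : ℝ))))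
        = ⨅ k : {k : ℕ // 1 ≤ k},
            ((k : ℕ) : ℝ) * Real.exp (-(g * r ^ (1 / ((k : ℕ) : ℝ))))) ∧
    (∀ g D : ℝ, 0 < D → D < g →
      (⨅ η : {x : ℝ // 1 < x},
          (⌈Real.logb η (g / D)⌉₊ : ℝ) * Real.exp (-(g / (η : ℝ))))
        = ⨅ k : {k : ℕ // 1 ≤ k},
            ((k : ℕ) : ℝ) * Real.exp (-(g * (D / g) ^ (1 / ((k : ℕ) : ℝ))))) ∧
    (∀ g : ℝ, ∀ nmin nmax : ℕ, 0 < g → 0 < nmin → nmin < nmax →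
      (⨅ η : {x : ℝ // 1 < x},
          (⌈Real.logb η ((nmax : ℝ) / nmin)⌉₊ : ℝ) * Real.exp (-(g / (η : ℝ))))
        = ⨅ k : {k : ℕ // 1 ≤ k},
            ((k : ℕ) : ℝ) * Real.exp (-(g * ((nmin : ℝ) / nmax) ^ (1 / ((k : ℕ) : ℝ))))) := by
  refine ⟨stitched_key, ?_, ?_⟩
  · intro g D hD hDg
    have hg : 0 < g := lt_trans hD hDg
    have := stitched_key g (D / g) hg ⟨div_pos hD hg, (div_lt_one hg).mpr hDg⟩
    rwa [one_div_div] at this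
  · intro g nmin nmax hg hmin hlt
    have hmin' : (0 : ℝ) < nmin := by exact_mod_cast hmin
    have hmax' : (0 : ℝ) < nmax := by exact_mod_cast lt_trans hmin hlt
    have := stitched_key g ((nmin : ℝ) / nmax) hg
      ⟨div_pos hmin' hmax', (div_lt_one hmax').mpr (by exact_mod_cast hlt)⟩
    rwa [one_div_div] at this

end
end

section
/- Let K ≥ 1 and let the K data streams be mutually independent, the a-th stream consisting of independent observations each with a sub-ψ_{μ^a} distribution; write GL_n^a(μ1^a, μ0^a) for the GLR-like statistic based on the first n observations of stream a. Suppose that for each a ∈ [K] there are functions f^a : ℕ → [0,∞) and h^a : (0,1] → [0,∞) with h^a nonincreasing and h^a(α) → ∞ as α → 0, such that for every α ∈ (0,1], P( ∃ n ≥ 1 : log GL_n^a(μ1^a, μ0^a) ≥ f^a(n) + h^a(α) ) ≤ α. Then for every ε > 0, P( ∃ (n_1, …, n_K) ∈ ℕ^K : Σ_{a=1}^K log GL_{n_a}^a(μ1^a, μ0^a) ≥ Σ_{a=1}^K f^a(n_a) + ε ) ≤ P( Σ_{a=1}^K h^a(U_a) ≥ ε ), where U_1, …, U_K are independent Uniform[0,1]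 random variables. -/
open MeasureTheory ProbabilityTheory Real Set Filter
open scoped Classical ENNReal

noncomputable section

/-!
For each stream put `T_a := sup_{n ≥ 1} (log GL_n^a − f^a(n))`. The crossing hypothesis says
`P(T_a > h^a(α)) ≤ α` for all `α ∈ (0, 1]`; since `h^a` is antitone this makes `T_a`
stochastically smaller than `h^a(U_a)` (quantile coupling). The event of the theorem forces
`Σ_a T_a ≥ ε`, and for independent summands stochastic order passes to the sum (replace one
coordinate at a time, by Fubini). Everything is done in `EReal`, as `log GL_n` may be infinite.
-/

lemma EReal.coe_finset_sum {ι : Type*} (s : Finset ι) (g : ι → ℝ) :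
    ((∑ i ∈ s, g i : ℝ) : EReal) = ∑ i ∈ s, (g i : EReal) :=
  map_sum (⟨⟨((↑) : ℝ → EReal), EReal.coe_zero⟩, EReal.coe_add⟩ : ℝ →+ EReal) g s

lemma EReal.coe_le_sum_of_le_add {ι : Type*} (s : Finset ι) {c : ℝ} {g : ι → ℝ}
    {L T : ι → EReal} (hL : ((∑ i ∈ s, g i + c : ℝ) : EReal) ≤ ∑ i ∈ s, L i)
    (hLT : ∀ i ∈ s, L i ≤ T i + g i) : (c : EReal) ≤ ∑ i ∈ s, T i := by
  rw [← (EReal.addLECancellable_coe (∑ i ∈ s, g i)).add_le_add_iff_left]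
  calc ((∑ i ∈ s, g i : ℝ) : EReal) + c = ((∑ i ∈ s, g i + c : ℝ) : EReal) := rfl
    _ ≤ ∑ i ∈ s, (T i + g i) := hL.trans (Finset.sum_le_sum hLT)
    _ = ((∑ i ∈ s, g i : ℝ) : EReal) + ∑ i ∈ s, T i := by
      rw [Finset.sum_add_distrib, EReal.coe_finset_sum, add_comm]

section StochasticOrder

variable {α : Type*} [MeasurableSpace α] [AddCommMonoid α] [MeasurableAdd₂ α]

lemma MeasureTheory.Measure.pi_sum_mem_eq_prod {n : ℕ} (μ : Fin (n + 1) → Measure α)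
    [∀ i, SigmaFinite (μ i)] {S : Set α} (hS : MeasurableSet S) :
    Measure.pi μ {x | ∑ i, x i ∈ S}
      = ((μ 0).prod (Measure.pi fun j => μ (Fin.succ j))) {p | p.1 + ∑ j, p.2 j ∈ S} := by
  have hE : MeasurableSet {p : α × (Fin n → α) | p.1 + ∑ j, p.2 j ∈ S} :=
    (measurable_fst.add (Finset.measurable_sum _ fun j _ =>
      (measurable_pi_apply j).comp measurable_snd)) hS
  have hmp := measurePreserving_piFinSuccAbove μ 0
  simp only [Fin.succAbove_zero] at hmp
  rw [← hmp.measure_preimage hE.nullMeasurableSet]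
  congr 1
  ext x
  simp [Fin.sum_univ_succ, Fin.tail]

variable [PartialOrder α] [IsOrderedAddMonoid α]

theorem MeasureTheory.Measure.pi_sum_mem_le_of_isUpperSet {n : ℕ} (ν ρ : Fin n → Measure α)
    [∀ i, SigmaFinite (ν i)] [∀ i, SigmaFinite (ρ i)]
    (hνρ : ∀ i S, IsUpperSet S → MeasurableSet S → ν i S ≤ ρ i S)
    {S : Set α} (hS : IsUpperSet S) (hSm : MeasurableSet S) :
    Measure.pi ν {x | ∑ i, x i ∈ S} ≤ Measure.pi ρ {x | ∑ i, x i ∈ S} := by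
  induction n generalizing S with
  | zero => rw [Measure.pi_of_empty ν, Measure.pi_of_empty ρ]
  | succ n ih =>
    set ν' := Measure.pi fun j => ν (Fin.succ j)
    set ρ' := Measure.pi fun j => ρ (Fin.succ j)
    set E := {p : α × (Fin n → α) | p.1 + ∑ j, p.2 j ∈ S}
    have hE : MeasurableSet E :=
      (measurable_fst.add (Finset.measurable_sum _ fun j _ =>
        (measurable_pi_apply j).comp measurable_snd)) hSm
    rw [Measure.pi_sum_mem_eq_prod ν hSm, Measure.pi_sum_mem_eq_prod ρ hSm]
    calc ((ν 0).prod ν') E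
        = ∫⁻ x, ν' {y | ∑ j, y j ∈ (x + ·) ⁻¹' S} ∂ν 0 := Measure.prod_apply hE
      _ ≤ ∫⁻ x, ρ' {y | ∑ j, y j ∈ (x + ·) ⁻¹' S} ∂ν 0 :=
          lintegral_mono fun x => ih _ _ (fun i => hνρ (Fin.succ i))
            (hS.preimage fun _ _ h => add_le_add_right h x) (measurable_const_add x hSm)
      _ = ∫⁻ y, ν 0 {x | x + ∑ j, y j ∈ S} ∂ρ' :=
          (Measure.prod_apply hE).symm.trans (Measure.prod_apply_symm hE)
      _ ≤ ∫⁻ y, ρ 0 {x | x + ∑ j, y j ∈ S} ∂ρ' :=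
          lintegral_mono fun y => hνρ 0 _
            (hS.preimage fun _ _ h => add_le_add_left h _) (measurable_add_const _ hSm)
      _ = ((ρ 0).prod ρ') E := (Measure.prod_apply_symm hE).symm

end StochasticOrder

theorem ProbabilityTheory.iIndepFun.measure_sum_mem_le_of_isUpperSet
    {α : Type*} [MeasurableSpace α] [AddCommMonoid α] [MeasurableAdd₂ α] [PartialOrder α]
    [IsOrderedAddMonoid α] {Ω Ω' : Type*} [MeasurableSpace Ω] [MeasurableSpace Ω']
    {P : Measure Ω} {P' : Measure Ω'} [IsProbabilityMeasure P] [IsProbabilityMeasure P']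
    {n : ℕ} {T : Fin n → Ω → α} {V : Fin n → Ω' → α}
    (hTi : iIndepFun T P) (hVi : iIndepFun V P')
    (hT : ∀ i, Measurable (T i)) (hV : ∀ i, Measurable (V i))
    (hdom : ∀ i S, IsUpperSet S → MeasurableSet S → P.map (T i) S ≤ P'.map (V i) S)
    {S : Set α} (hS : IsUpperSet S) (hSm : MeasurableSet S) :
    P {ω | ∑ i, T i ω ∈ S} ≤ P' {ω' | ∑ i, V i ω' ∈ S} := by
  have hsum : MeasurableSet {x : Fin n → α | ∑ i, x i ∈ S} :=
    (Finset.measurable_sum _ fun i _ => measurable_pi_apply i) hSm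
  have := fun i => Measure.isProbabilityMeasure_map (μ := P) (hT i).aemeasurable
  have := fun i => Measure.isProbabilityMeasure_map (μ := P') (hV i).aemeasurable
  calc P {ω | ∑ i, T i ω ∈ S} = P.map (fun ω i => T i ω) {x | ∑ i, x i ∈ S} :=
        (Measure.map_apply (measurable_pi_lambda _ hT) hsum).symm
    _ = Measure.pi (fun i => P.map (T i)) {x | ∑ i, x i ∈ S} := by
        rw [hTi.map_fun_eq_pi_map fun i => (hT i).aemeasurable]
    _ ≤ Measure.pi (fun i => P'.map (V i)) {x | ∑ i, x i ∈ S} :=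
        Measure.pi_sum_mem_le_of_isUpperSet _ _ hdom hS hSm
    _ = P'.map (fun ω' i => V i ω') {x | ∑ i, x i ∈ S} := by
        rw [hVi.map_fun_eq_pi_map fun i => (hV i).aemeasurable]
    _ = P' {ω' | ∑ i, V i ω' ∈ S} := Measure.map_apply (measurable_pi_lambda _ hV) hsum

section UniformQuantile

variable {Ω' : Type*} [MeasurableSpace Ω'] {P' : Measure Ω'} {U : Ω' → ℝ}

lemma measure_preimage_Ioc_of_map_eq_uniform (hU : Measurable U)
    (hUunif : P'.map U = volume.restrict (Icc 0 1)) {α : ℝ} (hα : α ≤ 1) :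
    P' (U ⁻¹' Ioc 0 α) = ENNReal.ofReal α := by
  rw [← Measure.map_apply hU measurableSet_Ioc, hUunif, Measure.restrict_apply measurableSet_Ioc,
    inter_eq_left.2 (Ioc_subset_Icc_self.trans (Icc_subset_Icc_right hα)), Real.volume_Ioc,
    sub_zero]

lemma ae_mem_Ioc_of_map_eq_uniform (hU : Measurable U)
    (hUunif : P'.map U = volume.restrict (Icc 0 1)) : ∀ᵐ ω' ∂P', U ω' ∈ Ioc 0 1 := by
  refine ae_of_ae_map hU.aemeasurable ?_
  rw [hUunif, ae_restrict_iff' measurableSet_Icc]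
  filter_upwards [(Ioc_ae_eq_Icc (a := (0 : ℝ)) (b := 1) (μ := volume)).mem_iff] with u hu
  exact hu.2

/-- Agrees with `h` on `(0, 1]`, where a uniform variable lies almost surely; unlike `h`, it is
measurable (`antitone_extendIoc`). -/
def extendIoc (h : ℝ → ℝ) (u : ℝ) : EReal := if u ≤ 0 then ⊤ else (h (min u 1) : EReal)

lemma extendIoc_of_mem {h : ℝ → ℝ} {u : ℝ} (hu : u ∈ Ioc 0 1) : extendIoc h u = h u := by
  rw [extendIoc, if_neg hu.1.not_ge, min_eq_left hu.2]

lemma antitone_extendIoc {h : ℝ → ℝ} (hh : AntitoneOn h (Ioc 0 1)) :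
    Antitone (extendIoc h) := by
  intro u v huv
  by_cases hu : u ≤ 0
  · simp [extendIoc, hu]
  have hv : ¬v ≤ 0 := fun hv => hu (huv.trans hv)
  simp only [extendIoc, hu, hv, if_false, EReal.coe_le_coe_iff]
  exact hh ⟨lt_min (not_le.1 hu) one_pos, min_le_right _ _⟩
    ⟨lt_min (not_le.1 hv) one_pos, min_le_right _ _⟩ (min_le_min_right 1 huv)

theorem measure_preimage_le_of_tail_le {Ω : Type*} [MeasurableSpace Ω] {P : Measure Ω}
    [IsProbabilityMeasure P] {T : Ω → EReal} {h : ℝ → ℝ} (hh : AntitoneOn h (Ioc 0 1))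
    (hT : ∀ α ∈ Ioc (0 : ℝ) 1, P {ω | (h α : EReal) < T ω} ≤ ENNReal.ofReal α)
    (hU : Measurable U) (hUunif : P'.map U = volume.restrict (Icc 0 1))
    {S : Set EReal} (hS : IsUpperSet S) :
    P (T ⁻¹' S) ≤ P' ((extendIoc h ∘ U) ⁻¹' S) := by
  set q := P' ((extendIoc h ∘ U) ⁻¹' S)
  have hq : ∀ α ∈ Ioc (0 : ℝ) 1, (h α : EReal) ∈ S → ENNReal.ofReal α ≤ q := by
    intro α hα hαS
    rw [← measure_preimage_Ioc_of_map_eq_uniform hU hUunif hα.2]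
    refine measure_mono fun ω' hω' => hS ?_ hαS
    have hu : U ω' ∈ Ioc 0 1 := ⟨hω'.1, hω'.2.trans hα.2⟩
    simpa [extendIoc_of_mem hu] using hh hu hα hω'.2
  refine le_of_forall_gt_imp_ge_of_dense fun r hr => ?_
  rcases le_or_gt 1 r with h1r | hr1
  · exact prob_le_one.trans h1r
  have hr_top : r ≠ ⊤ := (hr1.trans ENNReal.one_lt_top).ne
  have hβ : r.toReal ∈ Ioc (0 : ℝ) 1 :=
    ⟨ENNReal.toReal_pos (pos_of_gt hr).ne' hr_top,
      ENNReal.toReal_le_of_le_ofReal zero_le_one (by simpa using hr1.le)⟩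
  have hr_eq : ENNReal.ofReal r.toReal = r := ENNReal.ofReal_toReal hr_top
  have hβS : (h r.toReal : EReal) ∉ S := fun hmem =>
    (hq _ hβ hmem).not_gt (hr_eq.symm ▸ hr)
  calc P (T ⁻¹' S) ≤ P {ω | (h r.toReal : EReal) < T ω} :=
        measure_mono fun ω hω => lt_of_not_ge fun hle => hβS (hS hle hω)
    _ ≤ r := (hT _ hβ).trans_eq hr_eq

end UniformQuantile

lemma measure_sum_extendIoc_mem_Ici_le {ι Ω' : Type*} [Fintype ι] [MeasurableSpace Ω']
    {P' : Measure Ω'} {U : ι → Ω' → ℝ} (hU : ∀ a, Measurable (U a))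
    (hUunif : ∀ a, P'.map (U a) = volume.restrict (Icc 0 1)) (h : ι → ℝ → ℝ) (ε : ℝ) :
    P' {ω' | ∑ a, (extendIoc (h a) ∘ U a) ω' ∈ Ici (ε : EReal)}
      ≤ P' {ω' | ε ≤ ∑ a, h a (U a ω')} := by
  refine measure_mono_ae ?_
  filter_upwards [ae_all_iff.2 fun a => ae_mem_Ioc_of_map_eq_uniform (hU a) (hUunif a)]
    with ω' hUω' hsum
  have hsum' : ((ε : ℝ) : EReal) ≤ ((∑ a, h a (U a ω') : ℝ) : EReal) := by
    simpa only [EReal.coe_finset_sum, Function.comp_apply, extendIoc_of_mem (hUω' _)]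
      using mem_Ici.1 hsum
  exact EReal.coe_le_coe_iff.1 hsum'

namespace SubPsiFamily

variable (F : SubPsiFamily)

lemma lowerSemicontinuous_logGL (n : ℕ) (μ1 μ0 : ℝ) :
    LowerSemicontinuous fun x => F.logGL n x μ1 μ0 :=
  (lowerSemicontinuous_iSup fun _ => Continuous.lowerSemicontinuous <|
    continuous_coe_real_ereal.comp <| by simp only [LR, Real.log_exp]; fun_prop).sup
    lowerSemicontinuous_const

def supExcessLogGL (μ1 μ0 : ℝ) (f : ℕ → ℝ) (x : ℕ → ℝ) : EReal :=
  ⨆ (n : ℕ) (_ : 1 ≤ n),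
    (F.logGL n (sampleMean (fun i (y : ℕ → ℝ) => y i) n x) μ1 μ0 - f n)

lemma measurable_supExcessLogGL (μ1 μ0 : ℝ) (f : ℕ → ℝ) :
    Measurable (F.supExcessLogGL μ1 μ0 f) := by
  refine Measurable.iSup fun n => Measurable.iSup fun _ => ?_
  have hmean : Measurable fun y : ℕ → ℝ => sampleMean (fun i (y : ℕ → ℝ) => y i) n y :=
    (Finset.measurable_sum _ fun i _ => measurable_pi_apply i).div_const _
  exact ((F.lowerSemicontinuous_logGL n μ1 μ0).measurable.comp hmean).sub_const _

variable {Ω : Type*} (X : ℕ → Ω → ℝ) (μ1 μ0 : ℝ) (f : ℕ → ℝ) (ω : Ω)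

lemma logGL_le_supExcessLogGL_add {n : ℕ} (hn : 1 ≤ n) :
    F.logGL n (sampleMean X n ω) μ1 μ0 ≤ F.supExcessLogGL μ1 μ0 f (fun i => X i ω) + f n :=
  (EReal.sub_le_iff_le_add (.inl (EReal.coe_ne_bot _)) (.inl (EReal.coe_ne_top _))).1 <|
    le_iSup₂ (f := fun n (_ : 1 ≤ n) =>
      F.logGL n (sampleMean X n ω) μ1 μ0 - f n) n hn

lemma exists_crossing_of_lt_supExcessLogGL {c : ℝ}
    (hc : (c : EReal) < F.supExcessLogGL μ1 μ0 f (fun i => X i ω)) :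
    ∃ n, 1 ≤ n ∧ ((f n + c : ℝ) : EReal) ≤ F.logGL n (sampleMean X n ω) μ1 μ0 := by
  obtain ⟨n, hc⟩ := lt_iSup_iff.1 hc
  obtain ⟨hn, hc⟩ := lt_iSup_iff.1 hc
  refine ⟨n, hn, ?_⟩
  rw [EReal.lt_sub_iff_add_lt (.inl (EReal.coe_ne_bot _)) (.inl (EReal.coe_ne_top _))] at hc
  rw [add_comm, EReal.coe_add]
  exact hc.le

end SubPsiFamily

theorem multi_stream_crossing_general
    (F : SubPsiFamily) (K : ℕ)
    {Ω : Type} [MeasurableSpace Ω] (P : Measure Ω) [IsProbabilityMeasure P]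
    (X : Fin K → ℕ → Ω → ℝ) (μa μ0a μ1a : Fin K → ℝ)
    (hsub : ∀ a i, F.SubPsi P (μa a) (X a i))
    (hindep_across :
      iIndepFun (fun a (ω : Ω) (i : ℕ) => X a i ω) P)
    (f : Fin K → ℕ → ℝ) (h : Fin K → ℝ → ℝ)
    (hh_anti : ∀ a, AntitoneOn (h a) (Set.Ioc 0 1))
    (hcross : ∀ a, ∀ α ∈ Set.Ioc (0 : ℝ) 1,
      P {ω | ∃ n : ℕ, 1 ≤ n ∧
          ((f a n + h a α : ℝ) : EReal)
            ≤ F.logGL n (sampleMean (X a) n ω) (μ1a a) (μ0a a)}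
        ≤ ENNReal.ofReal α)
    (ε : ℝ)
    {Ω' : Type} [MeasurableSpace Ω'] (P' : Measure Ω') [IsProbabilityMeasure P']
    (U : Fin K → Ω' → ℝ) (hUmeas : ∀ a, Measurable (U a))
    (hUindep : iIndepFun U P')
    (hUunif : ∀ a, P'.map (U a) = volume.restrict (Set.Icc (0 : ℝ) 1)) :
    P {ω | ∃ n : Fin K → ℕ, (∀ a, 1 ≤ n a) ∧
        (((∑ a, f a (n a)) + ε : ℝ) : EReal)
          ≤ ∑ a, F.logGL (n a) (sampleMean (X a) (n a) ω) (μ1a a) (μ0a a)}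
      ≤ P' {ω' | ε ≤ ∑ a, h a (U a ω')} := by
  set T : Fin K → Ω → EReal := fun a ω =>
    F.supExcessLogGL (μ1a a) (μ0a a) (f a) fun i => X a i ω
  set V : Fin K → Ω' → EReal := fun a => extendIoc (h a) ∘ U a
  have hT : ∀ a, Measurable (T a) := fun a =>
    (F.measurable_supExcessLogGL _ _ _).comp (measurable_pi_lambda _ fun i => (hsub a i).1)
  have hV : ∀ a, Measurable (V a) := fun a =>
    (antitone_extendIoc (hh_anti a)).measurable.comp (hUmeas a)
  have hdom : ∀ a S, IsUpperSet S → MeasurableSet S → P.map (T a) S ≤ P'.map (V a) S := by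
    intro a S hS hSm
    rw [Measure.map_apply (hT a) hSm, Measure.map_apply (hV a) hSm]
    refine measure_preimage_le_of_tail_le (hh_anti a) (fun α hα => ?_) (hUmeas a) (hUunif a) hS
    exact (measure_mono fun ω => F.exists_crossing_of_lt_supExcessLogGL (X a) _ _ _ ω).trans
      (hcross a α hα)
  calc _ ≤ P {ω | ∑ a, T a ω ∈ Ici (ε : EReal)} := measure_mono fun ω hω => by
        obtain ⟨_, hn, hle⟩ := hω
        exact EReal.coe_le_sum_of_le_add _ hle fun a _ =>
          F.logGL_le_supExcessLogGL_add (X a) _ _ (f a) ω (hn a)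
    _ ≤ P' {ω' | ∑ a, V a ω' ∈ Ici (ε : EReal)} :=
        iIndepFun.measure_sum_mem_le_of_isUpperSet
          (hindep_across.comp _ fun a => F.measurable_supExcessLogGL _ _ (f a))
          (hUindep.comp _ fun a => (antitone_extendIoc (hh_anti a)).measurable) hT hV hdom
          (isUpperSet_Ici _) measurableSet_Ici
    _ ≤ P' {ω' | ε ≤ ∑ a, h a (U a ω')} :=
        measure_sum_extendIoc_mem_Ici_le hUmeas hUunif h ε

/-- **Multi-stream combination of boundary-crossing bounds (eq. (5.2)).** -/
theorem multi_stream_crossing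
    (F : SubPsiFamily) (K : ℕ) (hK : 1 ≤ K)
    {Ω : Type} [MeasurableSpace Ω] (P : Measure Ω) [IsProbabilityMeasure P]
    (X : Fin K → ℕ → Ω → ℝ) (μa μ0a μ1a : Fin K → ℝ)
    (hμa : ∀ a, μa a ∈ F.M)
    (hindep_within : ∀ a, iIndepFun (X a) P)
    (hsub : ∀ a i, F.SubPsi P (μa a) (X a i))
    (hindep_across :
      iIndepFun (fun a (ω : Ω) (i : ℕ) => X a i ω) P)
    (f : Fin K → ℕ → ℝ) (h : Fin K → ℝ → ℝ)
    (hf_nonneg : ∀ a n, 0 ≤ f a n)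
    (hh_nonneg : ∀ a, ∀ α ∈ Set.Ioc (0 : ℝ) 1, 0 ≤ h a α)
    (hh_anti : ∀ a, AntitoneOn (h a) (Set.Ioc 0 1))
    (hh_lim : ∀ a, Tendsto (h a) (nhdsWithin 0 (Set.Ioi 0)) atTop)
    (hcross : ∀ a, ∀ α ∈ Set.Ioc (0 : ℝ) 1,
      P {ω | ∃ n : ℕ, 1 ≤ n ∧
          ((f a n + h a α : ℝ) : EReal)
            ≤ F.logGL n (sampleMean (X a) n ω) (μ1a a) (μ0a a)}
        ≤ ENNReal.ofReal α)
    (ε : ℝ) (hε : 0 < ε)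
    {Ω' : Type} [MeasurableSpace Ω'] (P' : Measure Ω') [IsProbabilityMeasure P']
    (U : Fin K → Ω' → ℝ) (hUmeas : ∀ a, Measurable (U a))
    (hUindep : iIndepFun U P')
    (hUunif : ∀ a, P'.map (U a) = volume.restrict (Set.Icc (0 : ℝ) 1)) :
    P {ω | ∃ n : Fin K → ℕ, (∀ a, 1 ≤ n a) ∧
        (((∑ a, f a (n a)) + ε : ℝ) : EReal)
          ≤ ∑ a, F.logGL (n a) (sampleMean (X a) (n a) ω) (μ1a a) (μ0a a)}
      ≤ P' {ω' | ε ≤ ∑ a, h a (U a ω')} :=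
  multi_stream_crossing_general F K P X μa μ0a μ1a hsub hindep_across f h hh_anti hcross ε P' U
    hUmeas hUindep hUunif

end
end
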